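/- Let B be a totally sign-skew-symmetric n×n integer matrix satisfying the Assumption, let w be a finite sequence of mutation indices and let k be an index. Let ε ∈ {1, −1} be the sign of the k-th row of G_w^B (which is sign-coherent under the Assumption). Then the C- and G-matrices of μ_k(B) along the sequence k·w (k prepended to w) satisfy C_{k·w}^{μ_k(B)} = (J_k + [−ε·B]_+^{k·})·C_w^B and G_{k·w}^{μ_k(B)} = (J_k + [ε·B]_+^{·k})·G_w^B. -/

import Mathlib

open Matrix

/-- Mutation of an integer matrix at index `k`. -/
def mutB {n : ℕ} (B : Matrix (Fin n) (Fin n) ℤ) (k : Fin n) : Matrix (Fin n) (Fin n) ℤ :=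
  Matrix.of fun i j =>
    if i = k ∨ j = k then -B i j
    else B i j + (B i k).sign * max (B i k * B k j) 0

/-- Sign-skew-symmetric matrix. -/
def SignSkew {n : ℕ} (B : Matrix (Fin n) (Fin n) ℤ) : Prop :=
  ∀ i j, B i j * B j i ≤ 0 ∧ (B i j * B j i = 0 → B i j = 0 ∧ B j i = 0)

/-- Entrywise positive part `[A]₊`. -/
def matPos {n : ℕ} (A : Matrix (Fin n) (Fin n) ℤ) : Matrix (Fin n) (Fin n) ℤ :=
  Matrix.of fun i j => max (A i j) 0

/-- `A^{k·}`: agrees with `A` in row `k`, zero elsewhere. -/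
def rowSel {n : ℕ} (A : Matrix (Fin n) (Fin n) ℤ) (k : Fin n) : Matrix (Fin n) (Fin n) ℤ :=
  Matrix.of fun i j => if i = k then A i j else 0

/-- `A^{·k}`: agrees with `A` in column `k`, zero elsewhere. -/
def colSel {n : ℕ} (A : Matrix (Fin n) (Fin n) ℤ) (k : Fin n) : Matrix (Fin n) (Fin n) ℤ :=
  Matrix.of fun i j => if j = k then A i j else 0

/-- `J_k`: identity matrix with the `(k,k)` entry replaced by `-1`. -/
def Jmat (n : ℕ) (k : Fin n) : Matrix (Fin n) (Fin n) ℤ :=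
  Matrix.of fun i j => if i = j then (if i = k then -1 else 1) else 0

/-- One mutation step on a triple `(B_w, C_w, G_w)`, with fixed initial matrix `B0`:
`B_{w·k} = μ_k(B_w)`, `C_{w·k} = C_w (J_k + [B_w]₊^{k·}) + [-C_w]₊^{·k} B_w`,
`G_{w·k} = G_w (J_k + [-B_w]₊^{·k}) - B0 [-C_w]₊^{·k}`. -/
def BCGstep {n : ℕ} (B0 : Matrix (Fin n) (Fin n) ℤ)
    (s : Matrix (Fin n) (Fin n) ℤ × Matrix (Fin n) (Fin n) ℤ × Matrix (Fin n) (Fin n) ℤ)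
    (k : Fin n) :
    Matrix (Fin n) (Fin n) ℤ × Matrix (Fin n) (Fin n) ℤ × Matrix (Fin n) (Fin n) ℤ :=
  (mutB s.1 k,
   s.2.1 * (Jmat n k + rowSel (matPos s.1) k) + colSel (matPos (-s.2.1)) k * s.1,
   s.2.2 * (Jmat n k + colSel (matPos (-s.1)) k) - B0 * colSel (matPos (-s.2.1)) k)

/-- The triple `(B_w, C_w, G_w)` associated to a mutation sequence `w`
(entries of `w` are applied from left to right). -/
def BCG {n : ℕ} (B : Matrix (Fin n) (Fin n) ℤ) (w : List (Fin n)) :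
    Matrix (Fin n) (Fin n) ℤ × Matrix (Fin n) (Fin n) ℤ × Matrix (Fin n) (Fin n) ℤ :=
  w.foldl (BCGstep B) (B, 1, 1)

/-- The exchange matrix `B_w` of `B` at the sequence `w`. -/
def Bmat {n : ℕ} (B : Matrix (Fin n) (Fin n) ℤ) (w : List (Fin n)) :
    Matrix (Fin n) (Fin n) ℤ := (BCG B w).1

/-- The `C`-matrix `C_w^B`. -/
def Cmat {n : ℕ} (B : Matrix (Fin n) (Fin n) ℤ) (w : List (Fin n)) :
    Matrix (Fin n) (Fin n) ℤ := (BCG B w).2.1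

/-- The `G`-matrix `G_w^B`. -/
def Gmat {n : ℕ} (B : Matrix (Fin n) (Fin n) ℤ) (w : List (Fin n)) :
    Matrix (Fin n) (Fin n) ℤ := (BCG B w).2.2

/-- Totally sign-skew-symmetric: every matrix obtained from `B` by a finite sequence of
mutations is sign-skew-symmetric. -/
def TotSSS {n : ℕ} (B : Matrix (Fin n) (Fin n) ℤ) : Prop :=
  ∀ w : List (Fin n), SignSkew (Bmat B w)

/-- The `j`-th column of `A` is sign-coherent with sign `ε`. -/
def ColHasSign {n : ℕ} (A : Matrix (Fin n) (Fin n) ℤ) (j : Fin n) (ε : ℤ) : Prop :=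
  (∃ i, A i j ≠ 0) ∧ ((ε = 1 ∧ ∀ i, 0 ≤ A i j) ∨ (ε = -1 ∧ ∀ i, A i j ≤ 0))

/-- The `j`-th column of `A` is sign-coherent. -/
def ColSignCoherent {n : ℕ} (A : Matrix (Fin n) (Fin n) ℤ) (j : Fin n) : Prop :=
  ∃ ε : ℤ, ColHasSign A j ε

/-- The `i`-th row of `A` is sign-coherent with sign `ε`. -/
def RowHasSign {n : ℕ} (A : Matrix (Fin n) (Fin n) ℤ) (i : Fin n) (ε : ℤ) : Prop :=
  (∃ j, A i j ≠ 0) ∧ ((ε = 1 ∧ ∀ j, 0 ≤ A i j) ∨ (ε = -1 ∧ ∀ j, A i j ≤ 0))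

/-- The **Assumption**: for every matrix `B₀` obtained from `B` or `-B` by a finite
sequence of mutations, every sequence `w` and every index `k`, the `k`-th columns of
`C_w^{B₀}` and `C_w^{-B₀ᵀ}` are both sign-coherent with the same sign. -/
def TheAssumption {n : ℕ} (B : Matrix (Fin n) (Fin n) ℤ) : Prop :=
  ∀ B0 : Matrix (Fin n) (Fin n) ℤ,
    ((∃ v : List (Fin n), B0 = Bmat B v) ∨ (∃ v : List (Fin n), B0 = Bmat (-B) v)) →
    ∀ (w : List (Fin n)) (k : Fin n),
      ∃ ε : ℤ, ColHasSign (Cmat B0 w) k ε ∧ ColHasSign (Cmat (-B0ᵀ) w) k ε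

/-!
Call `B` admissible if it is totally sign-skew-symmetric and satisfies the Assumption; this class
is closed under mutation, negation and transposition, and for its members the sign-coherent
recursions give `G_w B_w = B C_w` and `G_w^B (C_w^{-Bᵀ})ᵀ = 1`.

The theorem is proved together with the duality `G_w^B = (C^{B_wᵀ}_{w^{rev}})ᵀ`, by a simultaneous
induction on the length of `w` over all admissible matrices. Duality at `v·l` is the transpose of
the `C`-part of the rule for `(B_v)ᵀ` along `v^{rev}`. Duality turns the Assumption for `-B_w` into
a common sign of the `k`-th rows of `G_w^B` and `G_w^{-Bᵀ}`. In the `C`-part of the rule at `v·l`,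
the signs of the `l`-th column of `C` and of the `k`-th row of `G` survive the extra mutation unless
the `l`-th column of `C_v^B` is `±e_k`; then the `k`-th row of `G_v^B` is `±e_l`, both signs flip,
and a rank-one correction reconciles the two sides. The `G`-part follows from the `C`-part for
`-Bᵀ` by inverting `G_w^B (C_w^{-Bᵀ})ᵀ = 1`, since `J_k + [εB]₊^{·k}` is an involution.
-/

theorem Int.sign_mul_max_mul_comm (a b : ℤ) :
    a.sign * max (a * b) 0 = b.sign * max (b * a) 0 := by
  rw [mul_comm b a]
  rcases le_or_gt (a * b) 0 with h | h
  · simp [max_eq_right h]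
  · rcases lt_trichotomy a 0 with ha | rfl | ha <;> rcases lt_trichotomy b 0 with hb | rfl | hb <;>
      simp_all [Int.sign_eq_neg_one_of_neg, Int.sign_eq_one_of_pos] <;> nlinarith

theorem Int.sign_mul_max_add_max_mul (σ a b : ℤ) (hσ : σ = 1 ∨ σ = -1) :
    a.sign * max (a * b) 0 + max (-(σ * a)) 0 * (-b) = a * max (σ * b) 0 := by
  rcases hσ with rfl | rfl <;>
  rcases lt_trichotomy a 0 with ha | rfl | ha <;>
  simp [Int.sign_eq_neg_one_of_neg, Int.sign_eq_one_of_pos, max_def, *] <;> split_ifs <;> nlinarith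

section

variable {n : ℕ}

local notation "Mat" => Matrix (Fin n) (Fin n) ℤ

theorem mutB_apply_row (B : Mat) (k j : Fin n) : mutB B k k j = -B k j := by
  simp [mutB]

theorem mutB_apply_col (B : Mat) (k i : Fin n) : mutB B k i k = -B i k := by
  simp [mutB]

theorem mutB_apply_of_ne (B : Mat) {k i j : Fin n} (hi : i ≠ k) (hj : j ≠ k) :
    mutB B k i j = B i j + (B i k).sign * max (B i k * B k j) 0 := by
  simp [mutB, hi, hj]

theorem mutB_mutB (B : Mat) (k : Fin n) : mutB (mutB B k) k = B := by
  ext i j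
  by_cases hi : i = k
  · subst hi; simp [mutB_apply_row]
  by_cases hj : j = k
  · subst hj; simp [mutB_apply_col]
  rw [mutB_apply_of_ne _ hi hj, mutB_apply_of_ne _ hi hj, mutB_apply_col, mutB_apply_row,
    Int.sign_neg, neg_mul_neg]
  ring

theorem mutB_neg (B : Mat) (k : Fin n) : mutB (-B) k = -mutB B k := by
  ext i j
  by_cases h : i = k ∨ j = k
  · simp [mutB, h]
  · simp only [mutB, h, Matrix.of_apply, Matrix.neg_apply, if_false, Int.sign_neg, neg_mul_neg]
    ring

theorem mutB_transpose (B : Mat) (k : Fin n) : mutB Bᵀ k = (mutB B k)ᵀ := by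
  ext i j
  by_cases h : i = k ∨ j = k
  · simp [mutB, h, or_comm]
  · simp only [mutB, h, or_comm (a := j = k), Matrix.of_apply, Matrix.transpose_apply, if_false,
      Int.sign_mul_max_mul_comm (B k i)]

theorem mutB_neg_transpose (B : Mat) (k : Fin n) : mutB (-Bᵀ) k = -(mutB B k)ᵀ := by
  rw [mutB_neg, mutB_transpose]

theorem Bmat_eq_foldl (B : Mat) (w : List (Fin n)) : Bmat B w = w.foldl mutB B := by
  suffices ∀ s : Mat × Mat × Mat, (w.foldl (BCGstep B) s).1 = w.foldl mutB s.1 from this _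
  induction w with
  | nil => exact fun _ => rfl
  | cons k w ih => exact fun s => ih (BCGstep B s k)

theorem Bmat_append (B : Mat) (v w : List (Fin n)) : Bmat B (v ++ w) = Bmat (Bmat B v) w := by
  simp [Bmat_eq_foldl, List.foldl_append]

theorem Bmat_cons (B : Mat) (k : Fin n) (w : List (Fin n)) :
    Bmat B (k :: w) = Bmat (mutB B k) w :=
  Bmat_append B [k] w

theorem Bmat_append_singleton (B : Mat) (w : List (Fin n)) (l : Fin n) :
    Bmat B (w ++ [l]) = mutB (Bmat B w) l :=
  Bmat_append B w [l]

theorem Bmat_neg (B : Mat) (w : List (Fin n)) : Bmat (-B) w = -Bmat B w := by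
  induction w generalizing B with
  | nil => rfl
  | cons k w ih => rw [Bmat_cons, Bmat_cons, mutB_neg, ih]

theorem Bmat_transpose (B : Mat) (w : List (Fin n)) : Bmat Bᵀ w = (Bmat B w)ᵀ := by
  induction w generalizing B with
  | nil => rfl
  | cons k w ih => rw [Bmat_cons, Bmat_cons, mutB_transpose, ih]

theorem Bmat_neg_transpose (B : Mat) (w : List (Fin n)) : Bmat (-Bᵀ) w = -(Bmat B w)ᵀ := by
  rw [Bmat_neg, Bmat_transpose]

theorem Bmat_Bmat_reverse (B : Mat) (w : List (Fin n)) : Bmat (Bmat B w) w.reverse = B := by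
  induction w generalizing B with
  | nil => rfl
  | cons k w ih =>
    rw [Bmat_cons, List.reverse_cons, Bmat_append, ih, Bmat_cons, mutB_mutB]
    rfl

theorem Bmat_mutB_cons (B : Mat) (k : Fin n) (w : List (Fin n)) :
    Bmat (mutB B k) (k :: w) = Bmat B w := by
  rw [Bmat_cons, mutB_mutB]

theorem Cmat_append_singleton (B0 : Mat) (w : List (Fin n)) (l : Fin n) :
    Cmat B0 (w ++ [l]) = Cmat B0 w * (Jmat n l + rowSel (matPos (Bmat B0 w)) l)
      + colSel (matPos (-Cmat B0 w)) l * Bmat B0 w := by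
  simp [Cmat, Bmat, BCG, List.foldl_append, BCGstep]

theorem Gmat_append_singleton (B0 : Mat) (w : List (Fin n)) (l : Fin n) :
    Gmat B0 (w ++ [l]) = Gmat B0 w * (Jmat n l + colSel (matPos (-Bmat B0 w)) l)
      - B0 * colSel (matPos (-Cmat B0 w)) l := by
  simp [Gmat, Cmat, Bmat, BCG, List.foldl_append, BCGstep]

theorem mul_apply_of_row_support {A : Mat} {i l : Fin n} (h : ∀ s, s ≠ l → A i s = 0)
    (X : Mat) (j : Fin n) : (A * X) i j = A i l * X l j := by
  rw [Matrix.mul_apply]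
  exact Finset.sum_eq_single l (fun s _ hs => by rw [h s hs, zero_mul]) (by simp)

theorem mul_apply_of_col_support {X : Mat} {j k : Fin n} (h : ∀ s, s ≠ k → X s j = 0)
    (A : Mat) (i : Fin n) : (A * X) i j = A i k * X k j := by
  rw [Matrix.mul_apply]
  exact Finset.sum_eq_single k (fun s _ hs => by rw [h s hs, mul_zero]) (by simp)

theorem mul_Jmat_apply (A : Mat) (l i j : Fin n) :
    (A * Jmat n l) i j = if j = l then -A i l else A i j := by
  rw [mul_apply_of_col_support (k := j) (fun s hs => by simp [Jmat, hs])]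
  by_cases hj : j = l <;> simp [Jmat, hj]

theorem Jmat_mul_apply (A : Mat) (l i j : Fin n) :
    (Jmat n l * A) i j = if i = l then -A l j else A i j := by
  rw [mul_apply_of_row_support (l := i) (fun s hs => by simp [Jmat, Ne.symm hs])]
  by_cases hi : i = l <;> simp [Jmat, hi]

theorem mul_rowSel_apply (A X : Mat) (l i j : Fin n) :
    (A * rowSel X l) i j = A i l * X l j := by
  rw [mul_apply_of_col_support (k := l) (fun s hs => by simp [rowSel, hs])]
  simp [rowSel]

theorem colSel_mul_apply (X A : Mat) (l i j : Fin n) :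
    (colSel X l * A) i j = X i l * A l j := by
  rw [mul_apply_of_row_support (l := l) (fun s hs => by simp [colSel, hs])]
  simp [colSel]

theorem rowSel_mul_apply (X A : Mat) (l i j : Fin n) :
    (rowSel X l * A) i j = if i = l then (X * A) l j else 0 := by
  by_cases hi : i = l
  · subst hi; simp [Matrix.mul_apply, rowSel]
  · simp [Matrix.mul_apply, rowSel, hi]

theorem mul_colSel_apply (A X : Mat) (l i j : Fin n) :
    (A * colSel X l) i j = if j = l then (A * X) i l else 0 := by
  by_cases hj : j = l
  · subst hj; simp [Matrix.mul_apply, colSel]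
  · simp [Matrix.mul_apply, colSel, hj]

theorem mul_J_add_rowSel_apply (A X : Mat) (l i j : Fin n) :
    (A * (Jmat n l + rowSel X l)) i j = (if j = l then -A i l else A i j) + A i l * X l j := by
  rw [Matrix.mul_add, Matrix.add_apply, mul_Jmat_apply, mul_rowSel_apply]

theorem mul_J_add_colSel_apply (A X : Mat) (l i j : Fin n) :
    (A * (Jmat n l + colSel X l)) i j = if j = l then -A i l + (A * X) i l else A i j := by
  rw [Matrix.mul_add, Matrix.add_apply, mul_Jmat_apply, mul_colSel_apply]
  split_ifs <;> simp

theorem J_add_rowSel_mul_apply (A X : Mat) (l i j : Fin n) :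
    ((Jmat n l + rowSel X l) * A) i j = if i = l then -A l j + (X * A) l j else A i j := by
  rw [Matrix.add_mul, Matrix.add_apply, Jmat_mul_apply, rowSel_mul_apply]
  split_ifs <;> simp

theorem J_add_colSel_mul_apply (A X : Mat) (l i j : Fin n) :
    ((Jmat n l + colSel X l) * A) i j = (if i = l then -A l j else A i j) + X i l * A l j := by
  rw [Matrix.add_mul, Matrix.add_apply, Jmat_mul_apply, colSel_mul_apply]

theorem Jmat_transpose (l : Fin n) : (Jmat n l)ᵀ = Jmat n l := by
  ext i j
  by_cases h : i = j
  · subst h; rfl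
  · simp [Jmat, h, Ne.symm h]

theorem transpose_J_add_rowSel (X : Mat) (l : Fin n) :
    (Jmat n l + rowSel X l)ᵀ = Jmat n l + colSel Xᵀ l := by
  rw [Matrix.transpose_add, Jmat_transpose]
  rfl

theorem ColHasSign.eq_one_or_eq_neg_one {A : Mat} {j : Fin n} {ε : ℤ} (h : ColHasSign A j ε) :
    ε = 1 ∨ ε = -1 :=
  h.2.imp (·.1) (·.1)

theorem RowHasSign.eq_one_or_eq_neg_one {A : Mat} {i : Fin n} {ε : ℤ} (h : RowHasSign A i ε) :
    ε = 1 ∨ ε = -1 :=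
  ColHasSign.eq_one_or_eq_neg_one (A := Aᵀ) h

theorem ColHasSign.eq_sign {A : Mat} {i j : Fin n} {ε : ℤ} (h : ColHasSign A j ε)
    (hij : A i j ≠ 0) : ε = (A i j).sign := by
  rcases h.2 with ⟨rfl, hs⟩ | ⟨rfl, hs⟩
  · exact (Int.sign_eq_one_of_pos (lt_of_le_of_ne (hs i) hij.symm)).symm
  · exact (Int.sign_eq_neg_one_of_neg (lt_of_le_of_ne (hs i) hij)).symm

theorem RowHasSign.eq_sign {A : Mat} {i j : Fin n} {ε : ℤ} (h : RowHasSign A i ε)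
    (hij : A i j ≠ 0) : ε = (A i j).sign :=
  ColHasSign.eq_sign (A := Aᵀ) h hij

theorem RowHasSign.unique {A : Mat} {i : Fin n} {ε ε' : ℤ} (h : RowHasSign A i ε)
    (h' : RowHasSign A i ε') : ε = ε' := by
  obtain ⟨j, hj⟩ := h.1
  rw [h.eq_sign hj, h'.eq_sign hj]

theorem ColHasSign.apply_eq_of_mul_eq_one {A : Mat} {i j : Fin n} {ε y : ℤ}
    (h : ColHasSign A j ε) (hy : A i j * y = 1) : A i j = ε := by
  rw [h.eq_sign (left_ne_zero_of_mul_eq_one hy)]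
  rcases Int.eq_one_or_neg_one_of_mul_eq_one hy with h1 | h1 <;> rw [h1] <;> rfl

theorem RowHasSign.apply_eq_of_mul_eq_one {A : Mat} {i j : Fin n} {ε y : ℤ}
    (h : RowHasSign A i ε) (hy : A i j * y = 1) : A i j = ε :=
  ColHasSign.apply_eq_of_mul_eq_one (A := Aᵀ) h hy

theorem RowHasSign.apply_eq_zero_of_neg {A A' : Mat} {i i' j : Fin n} {ε : ℤ}
    (h : RowHasSign A i ε) (h' : RowHasSign A' i' (-ε)) (he : A i j = A' i' j) : A i j = 0 := by
  by_contra hne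
  have h1 := h.eq_sign hne
  have h2 := h'.eq_sign (he ▸ hne)
  rw [← he] at h2
  rcases h.eq_one_or_eq_neg_one with rfl | rfl <;> omega

theorem SignSkew.apply_self {M : Mat} (h : SignSkew M) (l : Fin n) : M l l = 0 :=
  mul_self_eq_zero.mp (le_antisymm (h l l).1 (mul_self_nonneg _))

theorem SignSkew.neg {M : Mat} (h : SignSkew M) : SignSkew (-M) := fun i j => by
  simpa [neg_mul_neg] using h i j

theorem SignSkew.transpose {M : Mat} (h : SignSkew M) : SignSkew Mᵀ := fun i j => by
  simpa [mul_comm, and_comm] using h j i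

theorem ColHasSign.mul_self_eq_one {A : Mat} {j : Fin n} {ε : ℤ} (h : ColHasSign A j ε) :
    ε * ε = 1 := by
  rcases h.eq_one_or_eq_neg_one with rfl | rfl <;> rfl

theorem RowHasSign.mul_self_eq_one {A : Mat} {i : Fin n} {ε : ℤ} (h : RowHasSign A i ε) :
    ε * ε = 1 :=
  ColHasSign.mul_self_eq_one (A := Aᵀ) h

theorem colHasSign_one (k : Fin n) : ColHasSign (1 : Mat) k 1 :=
  ⟨⟨k, by simp⟩, Or.inl ⟨rfl, fun i => by rw [Matrix.one_apply]; split_ifs <;> simp⟩⟩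

theorem rowSel_matPos_neg (A : Mat) (l : Fin n) :
    rowSel (matPos (-A)) l = rowSel (matPos A) l - rowSel A l := by
  ext i j
  by_cases h : i = l <;> simp [rowSel, matPos, h]
  omega

theorem rowSel_matPos (A : Mat) (l : Fin n) :
    rowSel (matPos A) l = rowSel (matPos (-A)) l + rowSel A l := by
  rw [rowSel_matPos_neg, sub_add_cancel]

theorem colSel_matPos (A : Mat) (l : Fin n) :
    colSel (matPos A) l = colSel (matPos (-A)) l + colSel A l := by
  ext i j
  by_cases h : j = l <;> simp [colSel, matPos, h]
  omega

theorem colSel_mul_eq_mul_rowSel (X M : Mat) (l : Fin n) : colSel X l * M = X * rowSel M l := by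
  ext i j
  rw [colSel_mul_apply, mul_rowSel_apply]

theorem mul_colSel (A X : Mat) (l : Fin n) : A * colSel X l = colSel (A * X) l := by
  ext i j
  rw [mul_colSel_apply]
  by_cases h : j = l <;> simp [colSel, h]

theorem colSel_matPos_neg_of_nonneg {C : Mat} {l : Fin n} (h : ∀ i, 0 ≤ C i l) :
    colSel (matPos (-C)) l = 0 := by
  ext i j
  by_cases hj : j = l
  · subst hj; simp [colSel, matPos, h i]
  · simp [colSel, hj]

theorem colSel_matPos_neg_of_nonpos {C : Mat} {l : Fin n} (h : ∀ i, C i l ≤ 0) :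
    colSel (matPos (-C)) l = -colSel C l := by
  ext i j
  by_cases hj : j = l
  · subst hj; simp [colSel, matPos, h i]
  · simp [colSel, hj]

theorem Cmat_append_singleton_of_colHasSign {B0 : Mat} {w : List (Fin n)} {l : Fin n} {σ : ℤ}
    (hσ : ColHasSign (Cmat B0 w) l σ) :
    Cmat B0 (w ++ [l]) = Cmat B0 w * (Jmat n l + rowSel (matPos (σ • Bmat B0 w)) l) := by
  rw [Cmat_append_singleton]
  rcases hσ.2 with ⟨rfl, hs⟩ | ⟨rfl, hs⟩
  · rw [colSel_matPos_neg_of_nonneg hs, Matrix.zero_mul, add_zero, one_smul]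
  · rw [colSel_matPos_neg_of_nonpos hs, Matrix.neg_mul, colSel_mul_eq_mul_rowSel, neg_one_smul,
      rowSel_matPos_neg, mul_add, mul_add, mul_sub]
    abel

theorem Gmat_append_singleton_of_colHasSign {B0 : Mat} {w : List (Fin n)} {l : Fin n} {σ : ℤ}
    (hσ : ColHasSign (Cmat B0 w) l σ) (hGB : Gmat B0 w * Bmat B0 w = B0 * Cmat B0 w) :
    Gmat B0 (w ++ [l]) = Gmat B0 w * (Jmat n l + colSel (matPos (-(σ • Bmat B0 w))) l) := by
  rw [Gmat_append_singleton]
  rcases hσ.2 with ⟨rfl, hs⟩ | ⟨rfl, hs⟩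
  · rw [colSel_matPos_neg_of_nonneg hs, Matrix.mul_zero, sub_zero, one_smul]
  · rw [colSel_matPos_neg_of_nonpos hs, Matrix.mul_neg, sub_neg_eq_add, mul_colSel, ← hGB,
      ← mul_colSel, neg_one_smul, neg_neg, colSel_matPos (Bmat B0 w), mul_add, mul_add, mul_add,
      add_assoc]

theorem J_add_colSel_mul_mutB {M : Mat} {l : Fin n} (hll : M l l = 0) {σ : ℤ}
    (hσ : σ = 1 ∨ σ = -1) :
    (Jmat n l + colSel (matPos (-(σ • M))) l) * mutB M l
      = M * (Jmat n l + rowSel (matPos (σ • M)) l) := by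
  ext i j
  rw [J_add_colSel_mul_apply, mul_J_add_rowSel_apply]
  by_cases hi : i = l
  · subst hi; by_cases hj : j = i <;> simp [matPos, hll, hj, mutB_apply_row, -zsmul_eq_mul]
  by_cases hj : j = l
  · subst hj; simp [matPos, hll, hi, mutB_apply_col]
  · simp only [if_neg hi, if_neg hj, mutB_apply_of_ne M hi hj, mutB_apply_row, matPos,
      Matrix.of_apply, Matrix.neg_apply, Matrix.smul_apply, smul_eq_mul]
    linarith [Int.sign_mul_max_add_max_mul σ (M i l) (M l j) hσ]

theorem J_add_colSel_mul_self {X : Mat} {l : Fin n} (hX : X l l = 0) :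
    (Jmat n l + colSel X l) * (Jmat n l + colSel X l) = 1 := by
  ext i j
  rw [J_add_colSel_mul_apply]
  by_cases hi : i = l <;> by_cases hj : j = l <;>
    simp [Jmat, colSel, Matrix.one_apply, hi, hj, hX, eq_comm (a := l)]

theorem Gmat_append_apply_of_ne (B0 : Mat) (w : List (Fin n)) {l j : Fin n} (hj : j ≠ l)
    (i : Fin n) : Gmat B0 (w ++ [l]) i j = Gmat B0 w i j := by
  rw [Gmat_append_singleton, Matrix.sub_apply, mul_J_add_colSel_apply, mul_colSel_apply,
    if_neg hj, if_neg hj, sub_zero]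

theorem apply_mul_apply_eq_one_of_row_support {X Y : Mat} (h : X * Yᵀ = 1) {k l : Fin n}
    (hX : ∀ j, j ≠ l → X k j = 0) : X k l * Y k l = 1 := by
  have hkk := congrFun (congrFun h k) k
  rwa [mul_apply_of_row_support hX, Matrix.one_apply_eq] at hkk

theorem row_support_iff_col_support {X Y : Mat} (h : X * Yᵀ = 1) (k l : Fin n) :
    (∀ j, j ≠ l → X k j = 0) ↔ ∀ i, i ≠ k → Y i l = 0 := by
  constructor
  · intro hX i hi
    have hki := congrFun (congrFun h k) i
    rw [mul_apply_of_row_support hX, Matrix.one_apply_ne (Ne.symm hi)] at hki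
    exact (mul_eq_zero.1 hki).resolve_left (left_ne_zero_of_mul_eq_one
      (apply_mul_apply_eq_one_of_row_support h hX))
  · intro hY j hj
    have h' : Yᵀ * X = 1 := mul_eq_one_comm.1 h
    have hlj := congrFun (congrFun h' l) j
    have hll := congrFun (congrFun h' l) l
    rw [mul_apply_of_row_support (l := k) hY, Matrix.one_apply_ne (Ne.symm hj)] at hlj
    rw [mul_apply_of_row_support (l := k) hY, Matrix.one_apply_eq] at hll
    exact (mul_eq_zero.1 hlj).resolve_left (left_ne_zero_of_mul_eq_one hll)

def GCDuality (B : Mat) (w : List (Fin n)) : Prop :=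
  Gmat B w = (Cmat (Bmat B w)ᵀ w.reverse)ᵀ

def CmatMutationRule (B : Mat) (k : Fin n) (w : List (Fin n)) : Prop :=
  ∀ ε, RowHasSign (Gmat B w) k ε →
    Cmat (mutB B k) (k :: w) = (Jmat n k + rowSel (matPos (-(ε • B))) k) * Cmat B w

theorem gcDuality_nil (B : Mat) : GCDuality B [] := by
  simp [GCDuality, Gmat, Cmat, BCG]

theorem cmatMutationRule_nil (B : Mat) (k : Fin n) : CmatMutationRule B k [] := by
  intro ε hε
  have hε1 : ε = 1 := hε.unique <| by
    rw [show Gmat B [] = 1 from rfl, ← Matrix.transpose_one]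
    exact colHasSign_one k
  have hC := Cmat_append_singleton_of_colHasSign (B0 := mutB B k) (w := []) (colHasSign_one k)
  simp only [List.nil_append] at hC
  rw [hε1, hC, one_smul, one_smul]
  change 1 * (Jmat n k + rowSel (matPos (mutB B k)) k) = _ * 1
  rw [one_mul, mul_one]
  congr 1
  ext i j
  by_cases hi : i = k
  · subst hi; simp [rowSel, matPos, mutB_apply_row]
  · simp [rowSel, hi]

theorem J_add_rowSel_sign_flip {B M C G : Mat} {k l : Fin n} {ε σ : ℤ}
    (hB : B k k = 0) (hσ : σ * σ = 1) (hε : ε * ε = 1)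
    (hC : ∀ i, C i l = if i = k then σ else 0) (hG : ∀ j, G k j = if j = l then -ε else 0)
    (hGB : G * mutB M l = B * (C * (Jmat n l + rowSel (matPos (σ • M)) l))) :
    (Jmat n k + rowSel (matPos (-(ε • B))) k) *
        (C * (Jmat n l + rowSel (matPos (-(σ • M))) l)) =
      (Jmat n k + rowSel (matPos (ε • B)) k) *
        (C * (Jmat n l + rowSel (matPos (σ • M)) l)) := by
  set P := Jmat n k + rowSel (matPos (-(ε • B))) k
  set Cσ := C * (Jmat n l + rowSel (matPos (σ • M)) l)
  -- Both sides differ from `P * Cσ` by `N`, whose only nonzero row is the `l`-th row of `M`.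
  set N : Mat := Matrix.of fun i j => if i = k then M l j else 0
  have hCN : C * rowSel (σ • M) l = N := by
    ext i j
    rw [mul_rowSel_apply, hC]
    split_ifs with hi <;> simp [N, hi, ← mul_assoc, hσ, -zsmul_eq_mul]
  have hPN : P * N = -N := by
    ext i j
    rw [J_add_rowSel_mul_apply, mul_apply_of_col_support (k := k) (fun s hs => by simp [N, hs])]
    split_ifs with hi <;> simp [N, matPos, hB, hi, -zsmul_eq_mul]
  have hBN : rowSel (ε • B) k * Cσ = N := by
    ext i j
    rw [rowSel_mul_apply, Matrix.smul_mul, ← hGB]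
    split_ifs with hi
    · rw [Matrix.smul_apply, mul_apply_of_row_support (l := l) (fun s hs => by rw [hG, if_neg hs]),
        hG, if_pos rfl, mutB_apply_row]
      simp [N, hi, ← mul_assoc, hε]
    · simp [N, hi]
  calc P * (C * (Jmat n l + rowSel (matPos (-(σ • M))) l))
      = P * Cσ - P * N := by rw [rowSel_matPos_neg, ← add_sub_assoc, mul_sub, mul_sub, hCN]
    _ = (P + rowSel (ε • B) k) * Cσ := by rw [hPN, sub_neg_eq_add, Matrix.add_mul P, hBN]
    _ = _ := by rw [rowSel_matPos (ε • B), ← add_assoc]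

structure Admissible (B : Mat) : Prop where
  totSSS : TotSSS B
  assumption : TheAssumption B

def GCDualityAt (u : List (Fin n)) : Prop :=
  ∀ Y : Mat, Admissible Y → GCDuality Y u

namespace Admissible

variable {B : Matrix (Fin n) (Fin n) ℤ}

theorem Bmat_apply_self (h : Admissible B) (w : List (Fin n)) (l : Fin n) : Bmat B w l l = 0 :=
  (h.totSSS w).apply_self l

theorem apply_self (h : Admissible B) (k : Fin n) : B k k = 0 :=
  h.Bmat_apply_self [] k

theorem colHasSign (h : Admissible B) (w : List (Fin n)) (l : Fin n) :
    ∃ σ, ColHasSign (Cmat B w) l σ ∧ ColHasSign (Cmat (-Bᵀ) w) l σ :=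
  h.assumption B (Or.inl ⟨[], rfl⟩) w l

theorem mutations (h : Admissible B) (v : List (Fin n)) : Admissible (Bmat B v) where
  totSSS w := by rw [← Bmat_append]; exact h.totSSS _
  assumption B0 hB0 := h.assumption B0 <| by
    rcases hB0 with ⟨u, rfl⟩ | ⟨u, rfl⟩
    · exact Or.inl ⟨v ++ u, (Bmat_append B v u).symm⟩
    · exact Or.inr ⟨v ++ u, by simp only [Bmat_append, Bmat_neg]⟩

theorem neg_transpose (h : Admissible B) : Admissible (-Bᵀ) where
  totSSS w := by rw [Bmat_neg_transpose]; exact (h.totSSS w).transpose.neg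
  assumption B0 hB0 w k := by
    obtain ⟨X, hX, rfl⟩ : ∃ X, ((∃ v, X = Bmat B v) ∨ ∃ v, X = Bmat (-B) v) ∧
        B0 = -Xᵀ := by
      rcases hB0 with ⟨v, rfl⟩ | ⟨v, rfl⟩
      · exact ⟨_, Or.inl ⟨v, rfl⟩, Bmat_neg_transpose B v⟩
      · refine ⟨_, Or.inr ⟨v, rfl⟩, ?_⟩
        rw [neg_neg, Bmat_transpose, Bmat_neg, Matrix.transpose_neg, neg_neg]
    obtain ⟨ε, h1, h2⟩ := h.assumption X hX w k
    exact ⟨ε, h2, by rwa [Matrix.transpose_neg, Matrix.transpose_transpose, neg_neg]⟩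

theorem neg (h : Admissible B) : Admissible (-B) where
  totSSS w := by rw [Bmat_neg]; exact (h.totSSS w).neg
  assumption B0 hB0 := h.assumption B0 <| by rwa [neg_neg, or_comm] at hB0

theorem transpose (h : Admissible B) : Admissible Bᵀ := by
  simpa using h.neg.neg_transpose

theorem Gmat_mul_Bmat (h : Admissible B) (w : List (Fin n)) :
    Gmat B w * Bmat B w = B * Cmat B w := by
  induction w using List.reverseRecOn with
  | nil => simp [Gmat, Bmat, Cmat, BCG]
  | append_singleton w l ih =>
    obtain ⟨σ, hσ, -⟩ := h.colHasSign w l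
    rw [Cmat_append_singleton_of_colHasSign hσ, Gmat_append_singleton_of_colHasSign hσ ih,
      Bmat_append_singleton, mul_assoc,
      J_add_colSel_mul_mutB (h.Bmat_apply_self w l) hσ.eq_one_or_eq_neg_one, ← mul_assoc, ih,
      mul_assoc]

theorem Gmat_mul_transpose_Cmat_neg_transpose (h : Admissible B) (w : List (Fin n)) :
    Gmat B w * (Cmat (-Bᵀ) w)ᵀ = 1 := by
  induction w using List.reverseRecOn with
  | nil => simp [Gmat, Cmat, BCG]
  | append_singleton w l ih =>
    obtain ⟨σ, hσ, hσ'⟩ := h.colHasSign w l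
    have hQ : (Jmat n l + rowSel (matPos (σ • Bmat (-Bᵀ) w)) l)ᵀ
        = Jmat n l + colSel (matPos (-(σ • Bmat B w))) l := by
      rw [transpose_J_add_rowSel, Bmat_neg_transpose]
      congr 2
      ext i j
      simp [matPos, -zsmul_eq_mul]
    rw [Gmat_append_singleton_of_colHasSign hσ (h.Gmat_mul_Bmat w),
      Cmat_append_singleton_of_colHasSign hσ', Matrix.transpose_mul, hQ, mul_assoc,
      ← mul_assoc (Jmat n l + _),
      J_add_colSel_mul_self (by simp [matPos, h.Bmat_apply_self, -zsmul_eq_mul]), one_mul, ih]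

theorem Gmat_neg_transpose_mul_transpose_Cmat (h : Admissible B) (w : List (Fin n)) :
    Gmat (-Bᵀ) w * (Cmat B w)ᵀ = 1 := by
  simpa using h.neg_transpose.Gmat_mul_transpose_Cmat_neg_transpose w

-- The Assumption for `-B_u` along the reversed sequence, read through duality.
theorem exists_rowHasSign_Gmat (h : Admissible B) {u : List (Fin n)} (hd : GCDuality B u)
    (hd' : GCDuality (-Bᵀ) u) (k : Fin n) :
    ∃ e, RowHasSign (Gmat B u) k e ∧ RowHasSign (Gmat (-Bᵀ) u) k e := by
  obtain ⟨e, h1, h2⟩ := h.assumption (Bmat (-B) u) (Or.inr ⟨u, rfl⟩) u.reverse k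
  rw [Bmat_neg] at h1 h2
  refine ⟨e, ?_, ?_⟩
  · rw [hd]
    rwa [Matrix.transpose_neg, neg_neg] at h2
  · rwa [hd', Bmat_neg_transpose, Matrix.transpose_neg, Matrix.transpose_transpose]

theorem Gmat_append_apply_of_row_support (h : Admissible B) {u : List (Fin n)} {k l : Fin n}
    (hk : ∀ j, j ≠ l → Gmat B u k j = 0) (j : Fin n) :
    Gmat B (u ++ [l]) k j = if j = l then -Gmat B u k l else 0 := by
  obtain ⟨σ, hσ, -⟩ := h.colHasSign u l
  rw [Gmat_append_singleton_of_colHasSign hσ (h.Gmat_mul_Bmat u), mul_J_add_colSel_apply,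
    mul_apply_of_row_support hk]
  split_ifs with hj
  · simp [matPos, h.Bmat_apply_self, -zsmul_eq_mul]
  · exact hk j hj

-- Mutation at `l` negates the `k`-th row of `G_u^B` and leaves the `k`-th row of `G_u^{-Bᵀ}`
-- unchanged off column `l`; both rows keep a common sign, so those entries vanish.
theorem row_support_Gmat_neg_transpose (h : Admissible B) {u : List (Fin n)} {k l : Fin n}
    (hu : GCDualityAt u) (hul : GCDualityAt (u ++ [l]))
    (hk : ∀ j, j ≠ l → Gmat B u k j = 0) : ∀ j, j ≠ l → Gmat (-Bᵀ) u k j = 0 := by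
  obtain ⟨e, hG, hG'⟩ := h.exists_rowHasSign_Gmat (hu B h) (hu _ h.neg_transpose) k
  obtain ⟨e₂, hG₂, hG₂'⟩ := h.exists_rowHasSign_Gmat (hul B h) (hul _ h.neg_transpose) k
  have hkl : Gmat B u k l ≠ 0 := by
    obtain ⟨j, hj⟩ := hG.1
    by_cases hjl : j = l
    · rwa [hjl] at hj
    · exact absurd (hk j hjl) hj
  have hflip : Gmat B (u ++ [l]) k l = -Gmat B u k l := by
    simpa using h.Gmat_append_apply_of_row_support hk l
  have he₂ : e₂ = -e := by
    rw [hG₂.eq_sign (hflip ▸ neg_ne_zero.2 hkl), hflip, Int.sign_neg, ← hG.eq_sign hkl]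
  subst he₂
  intro j hj
  exact hG'.apply_eq_zero_of_neg hG₂' (Gmat_append_apply_of_ne _ _ hj k).symm

theorem gcDuality_append (h : Admissible B) {v : List (Fin n)} {l : Fin n}
    (hv : GCDuality B v) (hvT : GCDuality (Bmat B v)ᵀ v.reverse)
    (hrule : CmatMutationRule (Bmat B v)ᵀ l v.reverse) : GCDuality B (v ++ [l]) := by
  obtain ⟨σ, hσ, -⟩ := h.colHasSign v l
  have hG : Gmat (Bmat B v)ᵀ v.reverse = (Cmat B v)ᵀ := by
    rw [hvT, Bmat_transpose, Bmat_Bmat_reverse, List.reverse_reverse, Matrix.transpose_transpose]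
  have hC := hrule σ (by rw [hG]; exact hσ)
  unfold GCDuality
  rw [Bmat_append_singleton, ← mutB_transpose, List.reverse_append, List.reverse_singleton,
    List.singleton_append, hC, Matrix.transpose_mul, transpose_J_add_rowSel, ← hv,
    Gmat_append_singleton_of_colHasSign hσ (h.Gmat_mul_Bmat v)]
  rfl

theorem Cmat_apply_and_Gmat_append_of_col_support (h : Admissible B) {v : List (Fin n)}
    {k l : Fin n} {ε σ : ℤ} (hv : GCDualityAt v)
    (hvl : GCDualityAt (v ++ [l])) (hC : ∀ i, i ≠ k → Cmat B v i l = 0)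
    (hε : RowHasSign (Gmat B v) k ε) (hσ : ColHasSign (Cmat B v) l σ) :
    Cmat B v k l = σ ∧ ∀ j, Gmat B (v ++ [l]) k j = if j = l then -ε else 0 := by
  have hD := h.Gmat_neg_transpose_mul_transpose_Cmat v
  have hG' := (row_support_iff_col_support hD k l).2 hC
  have hG : ∀ j, j ≠ l → Gmat B v k j = 0 := by
    simpa using h.neg_transpose.row_support_Gmat_neg_transpose hv hvl hG'
  have hGkl : Gmat B v k l = ε := hε.apply_eq_of_mul_eq_one
    (apply_mul_apply_eq_one_of_row_support (h.Gmat_mul_transpose_Cmat_neg_transpose v) hG)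
  have hunit := apply_mul_apply_eq_one_of_row_support hD hG'
  rw [mul_comm] at hunit
  exact ⟨hσ.apply_eq_of_mul_eq_one hunit,
    by simpa [hGkl] using h.Gmat_append_apply_of_row_support hG⟩

theorem exists_Gmat_apply_ne_zero (h : Admissible B) {v : List (Fin n)} {i k l : Fin n}
    (hv : GCDualityAt v) (hvl : GCDualityAt (v ++ [l]))
    (hik : i ≠ k) (hi : Cmat B v i l ≠ 0) : ∃ j, j ≠ l ∧ Gmat B v k j ≠ 0 := by
  by_contra! hG
  exact hi ((row_support_iff_col_support (h.Gmat_neg_transpose_mul_transpose_Cmat v) k l).1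
    (h.row_support_Gmat_neg_transpose hv hvl hG) i hik)

theorem cmatMutationRule_append (h : Admissible B) {v : List (Fin n)} {k l : Fin n}
    (hv : GCDualityAt v) (hvl : GCDualityAt (v ++ [l]))
    (ih : CmatMutationRule B k v) : CmatMutationRule B k (v ++ [l]) := by
  intro ε' hε'
  obtain ⟨ε, hε, -⟩ := h.exists_rowHasSign_Gmat (hv B h) (hv _ h.neg_transpose) k
  obtain ⟨σ, hσ, -⟩ := h.colHasSign v l
  have hk : Admissible (mutB B k) := h.mutations [k]
  obtain ⟨σ', hσ', -⟩ := hk.colHasSign (k :: v) l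
  have hC' := ih ε hε
  rw [← List.cons_append, Cmat_append_singleton_of_colHasSign hσ', Bmat_mutB_cons, hC',
    Cmat_append_singleton_of_colHasSign hσ, mul_assoc]
  by_cases hcc : ∀ i, i ≠ k → Cmat B v i l = 0
  · obtain ⟨hCkl, hGrow⟩ := h.Cmat_apply_and_Gmat_append_of_col_support hv hvl hcc hε hσ
    have hCcol : ∀ i, Cmat B v i l = if i = k then σ else 0 := fun i => by
      split_ifs with hi
      · rwa [hi]
      · exact hcc i hi
    have hεε : ε * ε = 1 := hε.mul_self_eq_one
    have hσσ : σ * σ = 1 := hσ.mul_self_eq_one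
    obtain rfl : ε' = -ε := by
      have hkl := hε'.apply_eq_of_mul_eq_one (j := l) (y := -ε) (by simp [hGrow, hεε])
      rwa [hGrow, if_pos rfl, eq_comm] at hkl
    obtain rfl : σ' = -σ := by
      have hkl : Cmat (mutB B k) (k :: v) k l = -σ := by
        rw [hC', J_add_rowSel_mul_apply, if_pos rfl, mul_apply_of_col_support hcc]
        simp [matPos, h.apply_self k, hCkl, -zsmul_eq_mul]
      rw [← hkl, hσ'.apply_eq_of_mul_eq_one (y := -σ) (by rw [hkl, neg_mul_neg, hσσ])]
    rw [neg_smul, neg_smul, neg_neg]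
    refine J_add_rowSel_sign_flip (h.apply_self k) hσσ hεε hCcol hGrow ?_
    rw [← Bmat_append_singleton, ← Cmat_append_singleton_of_colHasSign hσ]
    exact h.Gmat_mul_Bmat (v ++ [l])
  · push Not at hcc
    obtain ⟨i, hik, hi⟩ := hcc
    obtain ⟨j, hjl, hj⟩ := h.exists_Gmat_apply_ne_zero hv hvl hik hi
    have hCi : Cmat (mutB B k) (k :: v) i l = Cmat B v i l := by
      rw [hC', J_add_rowSel_mul_apply, if_neg hik]
    have hGj := Gmat_append_apply_of_ne B v hjl k
    obtain rfl : σ' = σ := by rw [hσ'.eq_sign (hCi ▸ hi), hCi, ← hσ.eq_sign hi]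
    obtain rfl : ε' = ε := by rw [hε'.eq_sign (hGj ▸ hj), hGj, ← hε.eq_sign hj]
    rfl

theorem gcDuality_and_cmatMutationRule (N : ℕ) :
    ∀ B : Matrix (Fin n) (Fin n) ℤ, Admissible B → ∀ w : List (Fin n), w.length = N →
      GCDuality B w ∧ ∀ k, CmatMutationRule B k w := by
  induction N with
  | zero =>
    intro B _ w hw
    rw [List.length_eq_zero_iff.1 hw]
    exact ⟨gcDuality_nil B, cmatMutationRule_nil B⟩
  | succ N ih =>
    intro B h w hw
    obtain ⟨v, l, rfl⟩ : ∃ v l, w = v ++ [l] :=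
      ⟨w.dropLast, w.getLast (List.ne_nil_of_length_eq_add_one hw),
        (List.dropLast_append_getLast _).symm⟩
    have hv : v.length = N := by simpa using hw
    have hvl : GCDualityAt (v ++ [l]) := fun Y hY =>
      have hYv := ih _ (hY.mutations v).transpose v.reverse (by simpa)
      hY.gcDuality_append (ih Y hY v hv).1 hYv.1 (hYv.2 l)
    exact ⟨hvl B h, fun k =>
      h.cmatMutationRule_append (fun Y hY => (ih Y hY v hv).1) hvl ((ih B h v hv).2 k)⟩

theorem gcDuality (h : Admissible B) (w : List (Fin n)) : GCDuality B w :=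
  (gcDuality_and_cmatMutationRule _ B h w rfl).1

theorem Cmat_mutB_cons (h : Admissible B) {w : List (Fin n)} {k : Fin n} {ε : ℤ}
    (hε : RowHasSign (Gmat B w) k ε) :
    Cmat (mutB B k) (k :: w) = (Jmat n k + rowSel (matPos (-(ε • B))) k) * Cmat B w :=
  (gcDuality_and_cmatMutationRule _ B h w rfl).2 k ε hε

theorem Gmat_mutB_cons (h : Admissible B) {w : List (Fin n)} {k : Fin n} {ε : ℤ}
    (hε : RowHasSign (Gmat B w) k ε) :
    Gmat (mutB B k) (k :: w) = (Jmat n k + colSel (matPos (ε • B)) k) * Gmat B w := by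
  obtain ⟨e, he, he'⟩ :=
    h.exists_rowHasSign_Gmat (h.gcDuality w) (h.neg_transpose.gcDuality w) k
  obtain rfl : e = ε := he.unique hε
  set Q := Jmat n k + colSel (matPos (e • B)) k
  have hQ : (Jmat n k + rowSel (matPos (-(e • -Bᵀ))) k)ᵀ = Q := by
    rw [transpose_J_add_rowSel]
    congr 2
    ext i j
    simp [matPos, -zsmul_eq_mul]
  have hQQ : Q * Q = 1 := J_add_colSel_mul_self (by simp [matPos, h.apply_self k, -zsmul_eq_mul])
  have hinv : (Cmat (-Bᵀ) w)ᵀ * Gmat B w = 1 :=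
    mul_eq_one_comm.1 (h.Gmat_mul_transpose_Cmat_neg_transpose w)
  have hk : Admissible (mutB B k) := h.mutations [k]
  have hD := hk.Gmat_mul_transpose_Cmat_neg_transpose (k :: w)
  rw [← mutB_neg_transpose, h.neg_transpose.Cmat_mutB_cons he', Matrix.transpose_mul, hQ] at hD
  calc Gmat (mutB B k) (k :: w)
      = Gmat (mutB B k) (k :: w) * ((Cmat (-Bᵀ) w)ᵀ * (Q * Q) * Gmat B w) := by
        rw [hQQ, Matrix.mul_one, hinv, Matrix.mul_one]
    _ = Gmat (mutB B k) (k :: w) * ((Cmat (-Bᵀ) w)ᵀ * Q) * (Q * Gmat B w) := by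
        simp only [Matrix.mul_assoc]
    _ = Q * Gmat B w := by rw [hD, Matrix.one_mul]

end Admissible

end

/-- dual mutation rule: under the Assumption, if `ε` is the sign of the
`k`-th row of `G_w^B`, then `C_{k·w}^{μ_k(B)} = (J_k + [-ε B]₊^{k·}) C_w^B` and
`G_{k·w}^{μ_k(B)} = (J_k + [ε B]₊^{·k}) G_w^B`. -/
theorem dual_mutation {n : ℕ} (B : Matrix (Fin n) (Fin n) ℤ) (hB : TotSSS B)
    (hA : TheAssumption B) (w : List (Fin n)) (k : Fin n) (ε : ℤ)
    (hε : RowHasSign (Gmat B w) k ε) :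
    Cmat (mutB B k) (k :: w) = (Jmat n k + rowSel (matPos (-(ε • B))) k) * Cmat B w ∧
    Gmat (mutB B k) (k :: w) = (Jmat n k + colSel (matPos (ε • B)) k) * Gmat B w :=
  have h : Admissible B := ⟨hB, hA⟩
  ⟨h.Cmat_mutB_cons hε, h.Gmat_mutB_cons hε⟩
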